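/- The concretisation of a well-formed conditioned symbolic trace is a concrete, well-formed trace: if pc ▷ τ is a well-formed conditioned symbolic trace and ρ is a trace concretisation mapping for τ, then ρ(pc ▷ τ) is a well-formed trace all of whose states are concrete, all of whose events are variable-free, and whose path condition val_ρ(pc) is variable-free. -/

import Mathlib

/-! # LAGC semantics: basic definitions

Program variables, values, expressions, starred expressions, symbolic states,
evaluation, concretisation, traces with events, the WHILE language with its
local evaluation (`valS`), the composition rule (`Step`), and global trace
semantics (`tracesOf`). -/

/-- Program variables. -/
abbrev Var := String

/-- Values: booleans and integers. -/
inductive Val where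
  | bool : Bool → Val
  | int  : Int → Val
deriving DecidableEq

/-- Binary operators. -/
inductive Op where
  | add | sub | mul | eqOp | lt
deriving DecidableEq

/-- Evaluation of the binary operators on values. -/
def applyOp : Op → Val → Val → Val
  | .add, .int a, .int b => .int (a + b)
  | .sub, .int a, .int b => .int (a - b)
  | .mul, .int a, .int b => .int (a * b)
  | .eqOp, a, b => .bool (decide (a = b))
  | .lt, .int a, .int b => .bool (decide (a < b))
  | _, _, _ => .int 0

/-- Expressions. -/
inductive Exp where
  | var : Var → Exp
  | val : Val → Exp
  | op  : Op → Exp → Exp → Exp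
deriving DecidableEq

/-- The set of variables occurring in an expression. -/
def Exp.vars : Exp → Set Var
  | .var x => {x}
  | .val _ => ∅
  | .op _ a b => a.vars ∪ b.vars

/-- Starred expressions: expressions extended with the symbol `∗`. -/
inductive Sexp where
  | star : Sexp
  | exp  : Exp → Sexp
deriving DecidableEq

/-- The set of variables occurring in a starred expression. -/
def Sexp.vars : Sexp → Set Var
  | .star => ∅
  | .exp e => e.vars

/-- A symbolic state: a partial map from variables to starred expressions. -/
abbrev SymState := Var → Option Sexp

/-- The domain of a symbolic state. -/
def domS (σ : SymState) : Set Var := {x | (σ x).isSome}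

/-- The symbolic variables of a state: those bound to `∗`. -/
def symbS (σ : SymState) : Set Var := {x | σ x = some .star}

/-- State update `σ[x ↦ se]`. -/
def updState (σ : SymState) (x : Var) (se : Sexp) : SymState :=
  fun y => if y = x then some se else σ y

/-- Well-formed state: every variable occurring in a value of the state is
a symbolic variable of the state. -/
def wfState (σ : SymState) : Prop :=
  ∀ y se, σ y = some se → Sexp.vars se ⊆ symbS σ

/-- Every defined variable is bound to a value (the paper's standing
assumption that states are simplified by propagation of concrete values). -/
def ValuedState (σ : SymState) : Prop :=
  ∀ x se, σ x = some se → ∃ v : Val, se = .exp (.val v)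

/-- A concrete, well-formed state: well-formed, no symbolic variables, and
(by the standing simplification assumption) every defined variable is bound
to a value. -/
def ConcreteState (σ : SymState) : Prop :=
  wfState σ ∧ symbS σ = ∅ ∧ ValuedState σ

/-- State extension `σ ⊆ σ'`. -/
def stateExtends (σ σ' : SymState) : Prop :=
  ∀ x se, σ x = some se → σ' x = some se

/-- The evaluation function `val_σ : Exp → Exp`. -/
def evalE (σ : SymState) : Exp → Exp
  | .var x =>
      match σ x with
      | some (.exp e) => e
      | _ => .var x
  | .val v => .val v
  | .op o a b =>
      match evalE σ a, evalE σ b with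
      | .val v1, .val v2 => .val (applyOp o v1 v2)
      | r1, r2 => .op o r1 r2

/-- A (partial) mapping of variables to values, viewed as a symbolic state. -/
def rhoState (ρ : Var → Option Val) : SymState :=
  fun x => (ρ x).map (fun v => .exp (.val v))

/-- Evaluation of a starred expression (`∗` is left untouched). -/
def evalSexp (σ : SymState) : Sexp → Sexp
  | .star => .star
  | .exp e => .exp (evalE σ e)

/-- `ρ` is a concretisation mapping for the state `σ`:
`dom(ρ) ∩ dom(σ) = symb(σ)`. -/
def ConcMap (ρ : Var → Option Val) (σ : SymState) : Prop :=
  {x | (ρ x).isSome} ∩ domS σ = symbS σ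

/-- The concretisation `ρ ∘ σ` of a state:
`ρ ∪ { x ↦ val_ρ(σ(x)) | x ∈ dom(σ) \ dom(ρ) }`. -/
def concretize (ρ : Var → Option Val) (σ : SymState) : SymState :=
  fun x =>
    match ρ x with
    | some v => some (.exp (.val v))
    | none => (σ x).map (evalSexp (rhoState ρ))

/-- Trace elements: symbolic states and event markers over lists of
expressions. -/
inductive TElem where
  | state : SymState → TElem
  | event : List Exp → TElem

/-- A possibly infinite symbolic trace, as a sequence of optional elements. -/
abbrev Trace := ℕ → Option TElem

/-- The finite trace given by a list, as a `Trace`. -/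
def ofList (l : List TElem) : Trace := fun n => l[n]?

/-- The states occurring in a trace. -/
def statesOf (τ : Trace) : Set SymState := {σ | ∃ n, τ n = some (.state σ)}

/-- The states occurring in a finite trace. -/
def listStates (l : List TElem) : Set SymState := {σ | TElem.state σ ∈ l}

/-- `V = ⋃_{σ ∈ τ} symb(σ)`: all symbolic variables of states of the trace. -/
def traceV (τ : Trace) : Set Var := ⋃ σ ∈ statesOf τ, symbS σ

/-- A path condition is a (finite) set of Boolean expressions; a conditioned
symbolic trace `pc ▷ τ` is well-formed if all its states are well-formed, no
variable symbolic somewhere is non-symbolic elsewhere, the path condition and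
events only mention symbolic variables of the trace, and every event is
immediately preceded and followed by one and the same state. -/
def wfTrace (pc : Set Exp) (τ : Trace) : Prop :=
  (∀ σ ∈ statesOf τ, wfState σ) ∧
  (∀ σ ∈ statesOf τ, (domS σ \ symbS σ) ∩ traceV τ = ∅) ∧
  (∀ e ∈ pc, Exp.vars e ⊆ traceV τ) ∧
  (∀ n es, τ n = some (.event es) → ∀ e ∈ es, Exp.vars e ⊆ traceV τ) ∧
  (∀ n es, τ n = some (.event es) →
    ∃ σ, 0 < n ∧ τ (n - 1) = some (.state σ) ∧ τ (n + 1) = some (.state σ))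

/-- Concretisation of a trace element. -/
def concElem (ρ : Var → Option Val) : TElem → TElem
  | .state σ => .state (concretize ρ σ)
  | .event es => .event (es.map (evalE (rhoState ρ)))

/-- Concretisation of a (possibly infinite) trace. -/
def concretizeT (ρ : Var → Option Val) (τ : Trace) : Trace :=
  fun n => (τ n).map (concElem ρ)

/-- Concretisation of a finite trace. -/
def concretizeL (ρ : Var → Option Val) (l : List TElem) : List TElem :=
  l.map (concElem ρ)

/-- `ρ` is a trace concretisation mapping for `τ`: a concretisation mapping
for every state of `τ`. -/
def TraceConcMap (ρ : Var → Option Val) (τ : Trace) : Prop :=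
  ∀ σ ∈ statesOf τ, ConcMap ρ σ

/-- `ρ` is a trace concretisation mapping for the finite trace `l`. -/
def TraceConcMapL (ρ : Var → Option Val) (l : List TElem) : Prop :=
  ∀ σ ∈ listStates l, ConcMap ρ σ

/-- Concretisation of a path condition: `val_ρ(pc)`. -/
def pcConc (ρ : Var → Option Val) (pc : Set Exp) : Set Exp :=
  (evalE (rhoState ρ)) '' pc

/-- A path condition is consistent if, fully evaluated, it does not
contain `ff`. -/
def pcConsistent (pc : Set Exp) : Prop :=
  ∀ e ∈ pc, evalE (fun _ => none) e ≠ .val (.bool false)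

/-! ## The WHILE language -/

/-- WHILE statements. -/
inductive Stmt where
  | skip   : Stmt
  | assign : Var → Exp → Stmt
  | ifS    : Exp → Stmt → Stmt
  | seq    : Stmt → Stmt → Stmt
  | whileS : Exp → Stmt → Stmt

/-- The variables of a statement. -/
def stmtVars : Stmt → Set Var
  | .skip => ∅
  | .assign x e => {x} ∪ e.vars
  | .ifS e s => e.vars ∪ stmtVars s
  | .seq a b => stmtVars a ∪ stmtVars b
  | .whileS e s => e.vars ∪ stmtVars s

/-- A conditioned continuation trace `pc ▷ τ · K(s')`; `k = none` is the
empty continuation `K(∘)`. -/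
structure CTrace where
  pc : Set Exp
  tr : List TElem
  k  : Option Stmt

/-- The Boolean expression `val_σ(e) = tt`. -/
def eqTT (σ : SymState) (e : Exp) : Exp :=
  .op .eqOp (evalE σ e) (.val (.bool true))

/-- The Boolean expression `val_σ(e) = ff`. -/
def eqFF (σ : SymState) (e : Exp) : Exp :=
  .op .eqOp (evalE σ e) (.val (.bool false))

/-- Continuation `K(r'; s)`, with the rewrite `∘; s ↝ s`. -/
def seqK : Option Stmt → Stmt → Option Stmt
  | none, s => some s
  | some r, s => some (.seq r s)

/-- Local evaluation of WHILE statements: `val_σ : Stmt → Set CTrace`.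
The `while` case is the unfolding `val_σ(while e {s}) = val_σ(if e {s; while e {s}})`. -/
def valS (σ : SymState) : Stmt → Set CTrace
  | .skip => {⟨∅, [.state σ], none⟩}
  | .assign x e =>
      {⟨∅, [.state σ, .state (updState σ x (.exp (evalE σ e)))], none⟩}
  | .ifS e s =>
      {⟨{eqTT σ e}, [.state σ], some s⟩, ⟨{eqFF σ e}, [.state σ], none⟩}
  | .whileS e s =>
      {⟨{eqTT σ e}, [.state σ], some (.seq s (.whileS e s))⟩,
       ⟨{eqFF σ e}, [.state σ], none⟩}
  | .seq r s => {ct | ∃ ct' ∈ valS σ r, ct = ⟨ct'.pc, ct'.tr, seqK ct'.k s⟩}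

/-- Local evaluation of continuations; the empty continuation evaluates to
the empty set of traces. -/
def valC (σ : SymState) : Option Stmt → Set CTrace
  | none => ∅
  | some s => valS σ s

/-- The semantic chop `τ₁ ∗∗ τ₂` on finite traces. -/
def chopL (τ₁ τ₂ : List TElem) : List TElem := τ₁.dropLast ++ τ₂

/-- Definedness of the semantic chop: `τ₁` ends with a state that is extended
by the first state of `τ₂`. -/
def ChopDefined (τ₁ τ₂ : List TElem) : Prop :=
  ∃ σ σ', τ₁.getLast? = some (.state σ) ∧ τ₂.head? = some (.state σ') ∧
    stateExtends σ σ'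

/-- Chop of a finite trace with a possibly infinite continuation trace. -/
def chopT (l : List TElem) (t : Trace) : Trace :=
  fun n => if n < l.length - 1 then l[n]? else t (n - (l.length - 1))

/-- A configuration of the composition rules: a finite (concrete) trace
together with a continuation. -/
abbrev Config := List TElem × Option Stmt

/-- The composition rule for WHILE: `(sh, K(s)) → (sh ∗∗ τ, K(s'))` whenever
`last(sh) = σ`, `pc ▷ τ·K(s') ∈ val_σ(s)` and `pc` is consistent. -/
def Step (c c' : Config) : Prop :=
  ∃ σ ct, c.1.getLast? = some (TElem.state σ) ∧
    ct ∈ valC σ c.2 ∧ pcConsistent ct.pc ∧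
    c' = (chopL c.1 ct.tr, ct.k)

/-- `t` is the limit of the growing sequence of finite traces `f`. -/
def IsLimit (f : ℕ → List TElem) (t : Trace) : Prop :=
  ∀ n, ∃ N, ∀ i, N ≤ i → (f i)[n]? = t n

/-- Global trace semantics `traces(s, σ)`: traces of maximal sequences of
applications of the composition rule starting at `(⟨σ⟩, K(s))`; for finite
maximal sequences (ending with the empty continuation) the resulting finite
trace, for infinite sequences the limit. -/
def tracesOf (s : Stmt) (σ : SymState) : Set Trace :=
  {t | (∃ sh : List TElem,
          Relation.ReflTransGen Step ([TElem.state σ], some s) (sh, none) ∧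
          t = ofList sh) ∨
       (∃ run : ℕ → Config, run 0 = ([TElem.state σ], some s) ∧
          (∀ n, Step (run n) (run (n + 1))) ∧
          IsLimit (fun n => (run n).1) t)}

open Classical in
/-- `σ[V ↦ ∗]`: bind every variable of `V` to `∗`. -/
noncomputable def updStarSet (σ : SymState) (V : Set Var) : SymState :=
  fun x => if x ∈ V then some Sexp.star else σ x

/-- The event trace `evTrio_V(σ, ē)` of length three: the state `σ`, the
event `ev(val_{σ'}(ē))`, and the state `σ' = σ[V ↦ ∗]`. -/
noncomputable def evTrio (σ : SymState) (es : List Exp) (V : Set Var) :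
    List TElem :=
  [.state σ, .event (es.map (evalE (updStarSet σ V))), .state (updStarSet σ V)]
lemma evalE_op_vars (σ : SymState) (o : Op) (a b : Exp) :
    Exp.vars (evalE σ (.op o a b)) ⊆
      (evalE σ a).vars ∪ (evalE σ b).vars := by
  simp only [evalE]
  rcases evalE σ a with x | v | ⟨o', a', b'⟩ <;>
    rcases evalE σ b with y | w | ⟨o'', a'', b''⟩ <;>
    simp [Exp.vars]

lemma evalE_vars_subset (ρ : Var → Option Val) (e : Exp) :
    Exp.vars (evalE (rhoState ρ) e) ⊆ e.vars \ {x | (ρ x).isSome} := by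
  induction e with
  | var x =>
      cases h : ρ x with
      | none =>
          intro y hy
          simp only [evalE, rhoState, h, Option.map_none] at hy
          simp only [Exp.vars, Set.mem_singleton_iff] at hy
          subst hy
          exact ⟨by simp [Exp.vars], by simp [h]⟩
      | some v =>
          simp [evalE, rhoState, h, Exp.vars]
  | val v => simp [evalE, Exp.vars]
  | op o a b iha ihb =>
      intro z hz
      have hz' := evalE_op_vars (rhoState ρ) o a b hz
      simp only [Set.mem_union] at hz'
      simp only [Exp.vars, Set.mem_diff, Set.mem_union]
      rcases hz' with hz' | hz'
      · exact ⟨Or.inl (iha hz').1, (iha hz').2⟩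
      · exact ⟨Or.inr (ihb hz').1, (ihb hz').2⟩

lemma evalE_vars_empty (ρ : Var → Option Val) (e : Exp)
    (h : e.vars ⊆ {x | (ρ x).isSome}) :
    Exp.vars (evalE (rhoState ρ) e) = ∅ := by
  apply Set.eq_empty_iff_forall_notMem.2
  intro x hx
  have := evalE_vars_subset ρ e hx
  exact this.2 (h this.1)

lemma traceV_subset_dom (τ : Trace) (ρ : Var → Option Val)
    (hρ : TraceConcMap ρ τ) : traceV τ ⊆ {x | (ρ x).isSome} := by
  intro x hx
  simp only [traceV, Set.mem_iUnion] at hx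
  obtain ⟨σ, hσ, hxσ⟩ := hx
  have h := hρ σ hσ
  rw [← h] at hxσ
  exact hxσ.1

lemma symbS_concretize (ρ : Var → Option Val) (σ : SymState)
    (hc : ConcMap ρ σ) : symbS (concretize ρ σ) = ∅ := by
  apply Set.eq_empty_iff_forall_notMem.2
  intro x hx
  simp only [symbS, Set.mem_setOf_eq, concretize] at hx
  cases hρx : ρ x with
  | some v => simp [hρx] at hx
  | none =>
      simp only [hρx] at hx
      rcases hσx : σ x with _ | se
      · simp [hσx] at hx
      · simp only [hσx, Option.map_some] at hx
        cases se with
        | star =>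
            have : x ∈ symbS σ := hσx
            rw [← hc] at this
            simp [hρx] at this
        | exp e => simp [evalSexp] at hx

lemma concretize_state_mem (ρ : Var → Option Val) (τ : Trace)
    (σ' : SymState) (h : σ' ∈ statesOf (concretizeT ρ τ)) :
    ∃ σ ∈ statesOf τ, σ' = concretize ρ σ := by
  obtain ⟨n, hn⟩ := h
  simp only [concretizeT, Option.map_eq_some_iff] at hn
  obtain ⟨el, hel, hconc⟩ := hn
  cases el with
  | state σ =>
      exact ⟨σ, ⟨n, hel⟩, by simpa [concElem] using hconc.symm⟩
  | event es => simp [concElem] at hconc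

lemma wfState_concretize (ρ : Var → Option Val) (σ : SymState)
    (hwf : wfState σ) (hc : ConcMap ρ σ) : wfState (concretize ρ σ) := by
  intro y se h
  have hsub : Sexp.vars se ⊆ (∅ : Set Var) := by
    simp only [concretize] at h
    cases hρy : ρ y with
    | some v =>
        simp only [hρy, Option.some.injEq] at h
        subst h
        simp [Sexp.vars, Exp.vars]
    | none =>
        simp only [hρy, Option.map_eq_some_iff] at h
        obtain ⟨se₀, hse₀, hse⟩ := h
        subst hse
        cases se₀ with
        | star => simp [evalSexp, Sexp.vars]
        | exp e =>
            simp only [evalSexp, Sexp.vars]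
            have he : e.vars ⊆ {x | (ρ x).isSome} := by
              intro x hx
              have : x ∈ symbS σ := hwf y (.exp e) hse₀ hx
              rw [← hc] at this
              exact this.1
            rw [evalE_vars_empty ρ e he]
  rw [symbS_concretize ρ σ hc]
  exact hsub

/-- The concretisation of a well-formed conditioned symbolic
trace is a concrete, well-formed trace: all its states are concrete
(well-formed with no symbolic variables), all its events are variable-free,
and its path condition `val_ρ(pc)` is variable-free. -/
theorem concretisation_of_wf_trace_is_concrete
    (pc : Set Exp) (τ : Trace) (ρ : Var → Option Val)
    (hwf : wfTrace pc τ) (hρ : TraceConcMap ρ τ) :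
    wfTrace (pcConc ρ pc) (concretizeT ρ τ) ∧
    (∀ σ ∈ statesOf (concretizeT ρ τ), wfState σ ∧ symbS σ = ∅) ∧
    (∀ n es, concretizeT ρ τ n = some (.event es) →
      ∀ e ∈ es, Exp.vars e = ∅) ∧
    (∀ e ∈ pcConc ρ pc, Exp.vars e = ∅) := by
  obtain ⟨hwf1, hwf2, hwf3, hwf4, hwf5⟩ := hwf
  have hdom := traceV_subset_dom τ ρ hρ
  -- states
  have hstates : ∀ σ' ∈ statesOf (concretizeT ρ τ), wfState σ' ∧ symbS σ' = ∅ := by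
    intro σ' hσ'
    obtain ⟨σ, hσ, rfl⟩ := concretize_state_mem ρ τ σ' hσ'
    exact ⟨wfState_concretize ρ σ (hwf1 σ hσ) (hρ σ hσ),
      symbS_concretize ρ σ (hρ σ hσ)⟩
  -- events of the concretised trace
  have hev : ∀ n es, concretizeT ρ τ n = some (.event es) →
      ∃ es₀, τ n = some (.event es₀) ∧ es = es₀.map (evalE (rhoState ρ)) := by
    intro n es h
    simp only [concretizeT, Option.map_eq_some_iff] at h
    obtain ⟨el, hel, hconc⟩ := h
    cases el with
    | state σ => simp [concElem] at hconc
    | event es₀ =>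
        refine ⟨es₀, hel, ?_⟩
        simpa [concElem] using hconc.symm
  have hevvars : ∀ n es, concretizeT ρ τ n = some (.event es) →
      ∀ e ∈ es, Exp.vars e = ∅ := by
    intro n es h e he
    obtain ⟨es₀, hes₀, rfl⟩ := hev n es h
    simp only [List.mem_map] at he
    obtain ⟨e₀, he₀, rfl⟩ := he
    exact evalE_vars_empty ρ e₀ (fun x hx => hdom (hwf4 n es₀ hes₀ e₀ he₀ hx))
  have hpcvars : ∀ e ∈ pcConc ρ pc, Exp.vars e = ∅ := by
    intro e he
    obtain ⟨e₀, he₀, rfl⟩ := he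
    exact evalE_vars_empty ρ e₀ (fun x hx => hdom (hwf3 e₀ he₀ hx))
  refine ⟨⟨fun σ hσ => (hstates σ hσ).1, ?_, ?_, ?_, ?_⟩, hstates, hevvars, hpcvars⟩
  · intro σ hσ
    apply Set.eq_empty_iff_forall_notMem.2
    intro x hx
    have hxV := hx.2
    simp only [traceV, Set.mem_iUnion] at hxV
    obtain ⟨σ', hσ', hxσ'⟩ := hxV
    rw [(hstates σ' hσ').2] at hxσ'
    exact hxσ'
  · intro e he
    rw [hpcvars e he]
    exact Set.empty_subset _
  · intro n es h e hee
    rw [hevvars n es h e hee]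
    exact Set.empty_subset _
  · intro n es h
    obtain ⟨es₀, hes₀, -⟩ := hev n es h
    obtain ⟨σ, hn, h1, h2⟩ := hwf5 n es₀ hes₀
    exact ⟨concretize ρ σ, hn, by simp [concretizeT, h1, concElem],
      by simp [concretizeT, h2, concElem]⟩
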